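/- Let X ⊂ ℝ^d be a compact convex set with nonempty interior, let f : X → ℝ have a continuous induced ranking rule, attain its maximum on X, and satisfy the identifiability condition. For each n, let (X_1, …, X_n) be a RankOpt-type process for f on X and î_n ∈ argmax_{1≤i≤n} f(X_i). Then f(X_{î_n}) converges in probability to max_{x∈X} f(x) as n → ∞; that is, for every ε > 0, P(f(X_{î_n}) < max_{x∈X} f(x) − ε) → 0. -/

import Mathlib

open MeasureTheory ProbabilityTheory Set
open scoped ENNReal NNReal BigOperators

noncomputable section

/-- Euclidean space `ℝ^d`. -/
abbrev Euc (d : ℕ) := EuclideanSpace ℝ (Fin d)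

/-- The uniform probability measure on a set `s` (w.r.t. the ambient volume measure). -/
def unifOn {E : Type*} [MeasureSpace E] (s : Set E) : Measure E :=
  (volume s)⁻¹ • volume.restrict s

instance unifOn.instIsFiniteMeasure {E : Type*} [MeasureSpace E] (s : Set E) :
    IsFiniteMeasure (unifOn s) := by
  constructor
  rw [unifOn, Measure.smul_apply, Measure.restrict_apply_univ, smul_eq_mul]
  rcases eq_or_ne (volume s) 0 with h | h
  · simp [h]
  rcases eq_or_ne (volume s) ⊤ with h' | h'
  · simp [h, h']
  · rw [ENNReal.inv_mul_cancel h h']; exact ENNReal.one_lt_top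

/-- `f` has a continuous induced ranking rule on `Xset`. -/
def HasContinuousRanking {d : ℕ} (Xset : Set (Euc d)) (f : Euc d → ℝ) : Prop :=
  ∃ h : Euc d → ℝ, ContinuousOn h Xset ∧
    ∀ x ∈ Xset, ∀ x' ∈ Xset, Real.sign (f x - f x') = Real.sign (h x - h x')

/-- `f` has `(c, α)`-regular level sets on `Xset` with unique global maximizer `xs`. -/
def RegularLevelSets {d : ℕ} (Xset : Set (Euc d)) (f : Euc d → ℝ) (xs : Euc d)
    (c α : ℝ) : Prop :=
  xs ∈ Xset ∧ (∀ x ∈ Xset, f x ≤ f xs) ∧ (∀ x ∈ Xset, f x = f xs → x = xs) ∧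
    ∀ x ∈ Xset, ∀ x' ∈ Xset, f x = f x' →
      dist xs x ≤ c * dist xs x' ^ ((1 : ℝ) / (1 + α))

/-- Inner radius of a set. -/
def inradius {d : ℕ} (s : Set (Euc d)) : ℝ :=
  sSup {r : ℝ | 0 < r ∧ ∃ x ∈ s, Metric.closedBall x r ⊆ s}

/-- A RankOpt-type process: `X 0` is uniform on `Xset` and, conditionally on the history
`(X 0, …, X t)`, the point `X (t+1)` is uniform on a measurable set of positive volume squeezed
between the current upper level set and `Xset`. -/
def IsRankOptProcess {d : ℕ} {Ω : Type*} [MeasurableSpace Ω] (P : Measure Ω)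
    [IsFiniteMeasure P] (Xset : Set (Euc d)) (f : Euc d → ℝ) (n : ℕ)
    (X : Fin n → Ω → Euc d) : Prop :=
  (∀ i, Measurable (X i)) ∧
  (∀ h0 : 0 < n, P.map (X ⟨0, h0⟩) = unifOn Xset) ∧
  ∀ (t : ℕ) (ht : t + 1 < n),
    ∀ᵐ ω ∂P, ∃ A : Set (Euc d), MeasurableSet A ∧ 0 < volume A ∧
      {x ∈ Xset | ∀ i : Fin (t + 1), f (X (Fin.castLE ht.le i) ω) ≤ f x} ⊆ A ∧
      A ⊆ Xset ∧
      condDistrib (X ⟨t + 1, ht⟩)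
        (fun ω' => fun i : Fin (t + 1) => X (Fin.castLE ht.le i) ω') P
        (fun i : Fin (t + 1) => X (Fin.castLE ht.le i) ω) = unifOn A

/-- A Pure Adaptive Search: `X 0` is uniform on `Xset` and, conditionally on `X t`,
the point `X (t+1)` is uniform on the upper level set of `f (X t)`. -/
def IsPureAdaptiveSearch {d : ℕ} {Ω : Type*} [MeasurableSpace Ω] (P : Measure Ω)
    [IsFiniteMeasure P] (Xset : Set (Euc d)) (f : Euc d → ℝ) (n : ℕ)
    (X : Fin n → Ω → Euc d) : Prop :=
  (∀ i, Measurable (X i)) ∧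
  (∀ h0 : 0 < n, P.map (X ⟨0, h0⟩) = unifOn Xset) ∧
  ∀ (t : ℕ) (ht : t + 1 < n),
    ∀ᵐ ω ∂P,
      condDistrib (X ⟨t + 1, ht⟩) (X ⟨t, by omega⟩) P (X ⟨t, by omega⟩ ω)
        = unifOn {x ∈ Xset | f (X (⟨t, by omega⟩ : Fin n) ω) ≤ f x}

/-- Empirical ranking loss of a ranking rule `r` over the sample `x` with values `f ∘ x`. -/
def empLoss {d : ℕ} (f : Euc d → ℝ) {t : ℕ} (x : Fin t → Euc d)
    (r : Euc d → Euc d → ℝ) : ℝ :=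
  (2 / ((t : ℝ) * ((t : ℝ) - 1))) * ∑ i : Fin t, ∑ j : Fin t,
    if i < j ∧ r (x i) (x j) ≠ Real.sign (f (x i) - f (x j)) then (1 : ℝ) else 0

/-- Index of the smallest ranking structure of the nested sequence `R` containing a ranking rule
consistent with the sample. -/
def khat {d : ℕ} (f : Euc d → ℝ) (R : ℕ → Set (Euc d → Euc d → ℝ)) {t : ℕ}
    (x : Fin t → Euc d) : ℕ :=
  sInf {k : ℕ | 1 ≤ k ∧ ∃ r ∈ R k, empLoss f x r = 0}

/-- The exploitation sampling region of AdaRankOpt, given the history `x` and the current best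
point `xb`. -/
def adaSet {d : ℕ} (Xset : Set (Euc d)) (f : Euc d → ℝ)
    (R : ℕ → Set (Euc d → Euc d → ℝ)) {t : ℕ} (x : Fin t → Euc d) (xb : Euc d) :
    Set (Euc d) :=
  {y ∈ Xset | ∃ r ∈ R (khat f R x), empLoss f x r = 0 ∧ 0 ≤ r y xb}

/-- Bernoulli measure with parameter `p` on `Bool`. -/
def bern (p : ℝ) : Measure Bool :=
  ENNReal.ofReal p • Measure.dirac true + ENNReal.ofReal (1 - p) • Measure.dirac false

instance bern.instIsFiniteMeasure (p : ℝ) : IsFiniteMeasure (bern p) := by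
  constructor
  rw [bern]
  simp only [Measure.add_apply, Measure.smul_apply, measure_univ, smul_eq_mul, mul_one]
  exact ENNReal.add_lt_top.mpr ⟨ENNReal.ofReal_lt_top, ENNReal.ofReal_lt_top⟩

/-- An AdaRankOpt process with exploration parameter `p` and ranking structures `R`. -/
def IsAdaRankOptProcess {d : ℕ} {Ω : Type*} [MeasurableSpace Ω] (P : Measure Ω)
    [IsFiniteMeasure P] (Xset : Set (Euc d)) (f : Euc d → ℝ) (p : ℝ)
    (R : ℕ → Set (Euc d → Euc d → ℝ)) (n : ℕ) (X : Fin n → Ω → Euc d) : Prop :=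
  ∃ B : Fin n → Ω → Bool,
    (∀ i, Measurable (X i)) ∧ (∀ i, Measurable (B i)) ∧
    (∀ h0 : 0 < n, P.map (X ⟨0, h0⟩) = unifOn Xset) ∧
    ∀ (t : ℕ) (ht : t + 1 < n),
      P.map (B ⟨t + 1, ht⟩) = bern p ∧
      IndepFun (B ⟨t + 1, ht⟩)
        (fun ω => ((fun i : Fin (t + 1) => X (Fin.castLE ht.le i) ω),
                   (fun i : Fin (t + 1) => B (Fin.castLE ht.le i) ω))) P ∧
      ∃ ihat : Ω → Fin (t + 1), Measurable ihat ∧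
        (∀ᵐ ω ∂P, ∀ j : Fin (t + 1),
          f (X (Fin.castLE ht.le j) ω) ≤ f (X (Fin.castLE ht.le (ihat ω)) ω)) ∧
        (∀ᵐ ω ∂P,
          condDistrib (X ⟨t + 1, ht⟩)
            (fun ω' => ((fun i : Fin (t + 1) => X (Fin.castLE ht.le i) ω'),
                        B ⟨t + 1, ht⟩ ω')) P
            ((fun i : Fin (t + 1) => X (Fin.castLE ht.le i) ω), B ⟨t + 1, ht⟩ ω)
          = if B ⟨t + 1, ht⟩ ω then unifOn Xset
            else unifOn (adaSet Xset f R
                  (fun i : Fin (t + 1) => X (Fin.castLE ht.le i) ω)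
                  (X (Fin.castLE ht.le (ihat ω)) ω)))

/-- An AdaRankOpt process indexed by all of `ℕ`. -/
def IsAdaRankOptProcessNat {d : ℕ} {Ω : Type*} [MeasurableSpace Ω] (P : Measure Ω)
    [IsFiniteMeasure P] (Xset : Set (Euc d)) (f : Euc d → ℝ) (p : ℝ)
    (R : ℕ → Set (Euc d → Euc d → ℝ)) (X : ℕ → Ω → Euc d) : Prop :=
  ∃ B : ℕ → Ω → Bool,
    (∀ i, Measurable (X i)) ∧ (∀ i, Measurable (B i)) ∧
    P.map (X 0) = unifOn Xset ∧
    ∀ t : ℕ,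
      P.map (B (t + 1)) = bern p ∧
      IndepFun (B (t + 1))
        (fun ω => ((fun i : Fin (t + 1) => X i ω),
                   (fun i : Fin (t + 1) => B i ω))) P ∧
      ∃ ihat : Ω → Fin (t + 1), Measurable ihat ∧
        (∀ᵐ ω ∂P, ∀ j : Fin (t + 1), f (X j ω) ≤ f (X (ihat ω) ω)) ∧
        (∀ᵐ ω ∂P,
          condDistrib (X (t + 1))
            (fun ω' => ((fun i : Fin (t + 1) => X i ω'), B (t + 1) ω')) P
            ((fun i : Fin (t + 1) => X i ω), B (t + 1) ω)
          = if B (t + 1) ω then unifOn Xset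
            else unifOn (adaSet Xset f R (fun i : Fin (t + 1) => X i ω)
                  (X (ihat ω) ω)))

/-- The true ranking loss `L(r) = P(r(X,X') ≠ r_f(X,X'))` for `X, X'` independent uniform on
`Xset`. -/
def trueLoss {d : ℕ} (Xset : Set (Euc d)) (f : Euc d → ℝ) (r : Euc d → Euc d → ℝ) : ℝ :=
  (((unifOn Xset).prod (unifOn Xset))
    {q : Euc d × Euc d | r q.1 q.2 ≠ Real.sign (f q.1 - f q.2)}).toReal

/-- The random quantity whose expectation is the Rademacher average of the class `R` given the
ranking rule induced by `f`. -/
def radSupTerm {d : ℕ} (f : Euc d → ℝ) (R : Set (Euc d → Euc d → ℝ)) (n : ℕ)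
    (x : Fin n → Euc d) (ε : Fin (n / 2) → Bool) : ℝ :=
  sSup {v : ℝ | ∃ r ∈ R, v =
    (1 / ((n / 2 : ℕ) : ℝ)) * |∑ i : Fin (n / 2),
      (if ε i then (1 : ℝ) else -1) *
      (if r (x ⟨i.1, by have := i.isLt; omega⟩) (x ⟨n / 2 + i.1, by have := i.isLt; omega⟩)
          ≠ Real.sign (f (x ⟨i.1, by have := i.isLt; omega⟩)
            - f (x ⟨n / 2 + i.1, by have := i.isLt; omega⟩)) then (1 : ℝ) else 0)|}

/-- Expected Rademacher average `E[R_n(R)]` of the class `R` given `r_f`, where the sample is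
i.i.d. uniform on `Xset` and the signs are i.i.d. Rademacher. -/
def expRad {d : ℕ} (Xset : Set (Euc d)) (f : Euc d → ℝ)
    (R : Set (Euc d → Euc d → ℝ)) (n : ℕ) : ℝ :=
  ∫ x, (∫ ε, radSupTerm f R n x ε ∂(Measure.pi fun _ : Fin (n / 2) => bern (1 / 2)))
    ∂(Measure.pi fun _ : Fin n => unifOn Xset)

/-- Index type for the non-constant monomials of degree at most `k` in `d` variables. -/
def MonIdx (d k : ℕ) :=
  {a : Fin d → Fin (k + 1) // 1 ≤ ∑ i, (a i : ℕ) ∧ ∑ i, (a i : ℕ) ≤ k}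

instance (d k : ℕ) : Fintype (MonIdx d k) := by unfold MonIdx; infer_instance

/-- The monomial feature `x ↦ ∏ i, x i ^ a i`, a coordinate of the polynomial feature map
`Φ_k`. -/
def monFeature {d k : ℕ} (a : MonIdx d k) (x : Fin d → ℝ) : ℝ :=
  ∏ i, x i ^ ((a.1 i : ℕ))

end

/-!
Let `S = {x ∈ X | f x ≥ max f - ε}`. As long as all points sampled so far lie outside `S`, the
next sampling region contains `S`, so the next point misses `S` with conditional probability at
most `θ = 1 - |S| / |X|`. Hence all of `X_1, …, X_n` miss `S` with probability at most `θ ^ n`,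
and `θ < 1` by identifiability. The continuous ranking rule is what makes `S` measurable.
-/

lemma Real.nonneg_of_sign_eq {a b : ℝ} (h : Real.sign a = Real.sign b) (hb : 0 ≤ b) :
    0 ≤ a := by
  by_contra! ha
  rw [Real.sign_of_neg ha] at h
  rcases hb.eq_or_lt with rfl | hb
  · rw [Real.sign_zero] at h; norm_num at h
  · rw [Real.sign_of_pos hb] at h; norm_num at h

lemma ContinuousOn.measurableSet_inter_preimage {α β : Type*} [TopologicalSpace α]
    [MeasurableSpace α] [OpensMeasurableSpace α] [TopologicalSpace β] [MeasurableSpace β]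
    [BorelSpace β] {h : α → β} {s : Set α} {I : Set β} (hh : ContinuousOn h s)
    (hs : MeasurableSet s) (hI : MeasurableSet I) : MeasurableSet (s ∩ h ⁻¹' I) := by
  rw [← Subtype.image_preimage_coe]
  exact hs.subtype_image (hh.domRestrict.measurable hI)

/-- An upper level set of `f` is an upper set for the preorder induced by `h`, hence the trace
on `Xset` of the `h`-preimage of an upper set of `ℝ`, i.e. of an interval. -/
lemma HasContinuousRanking.measurableSet_le {d : ℕ} {Xset : Set (Euc d)} {f : Euc d → ℝ}
    (hf : HasContinuousRanking Xset f) (hX : MeasurableSet Xset) (c : ℝ) :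
    MeasurableSet {x ∈ Xset | c ≤ f x} := by
  obtain ⟨h, hh, hsign⟩ := hf
  set U := {x ∈ Xset | c ≤ f x}
  have hU : U = Xset ∩ h ⁻¹' upperClosure (h '' U) := by
    refine Subset.antisymm (fun x hx => ⟨hx.1, subset_upperClosure ⟨x, hx, rfl⟩⟩) ?_
    rintro x ⟨hxX, ⟨_, ⟨y, hy, rfl⟩, hyx⟩⟩
    have := Real.nonneg_of_sign_eq (hsign x hxX y hy.1) (sub_nonneg.2 hyx)
    exact ⟨hxX, by linarith [hy.2]⟩
  rw [hU]
  exact hh.measurableSet_inter_preimage hX (upperClosure _).upper.ordConnected.measurableSet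

lemma unifOn_eq_cond {E : Type*} [MeasureSpace E] (s : Set E) : unifOn s = volume[|s] := rfl

lemma unifOn_compl_le {E : Type*} [MeasureSpace E] {S A Y : Set E} (hS : MeasurableSet S)
    (hSA : S ⊆ A) (hAY : A ⊆ Y) (hY : volume Y ≠ ∞) :
    unifOn A Sᶜ ≤ 1 - volume S / volume Y := by
  rcases eq_or_ne (volume A) 0 with hA0 | hA0
  · simp [unifOn_eq_cond, cond_eq_zero_of_meas_eq_zero hA0]
  have hAfin : volume A ≠ ∞ := ne_top_of_le_ne_top hY (measure_mono hAY)
  have := cond_isProbabilityMeasure_of_finite hA0 hAfin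
  rw [unifOn_eq_cond, prob_compl_eq_one_sub hS, cond_apply' hS, inter_eq_right.2 hSA,
    ← ENNReal.div_eq_inv_mul]
  exact tsub_le_tsub_left (ENNReal.div_le_div_left (measure_mono hAY) _) 1

lemma measure_preimage_inter_le_of_condDistrib_le {Ω α β : Type*} [MeasurableSpace Ω]
    [MeasurableSpace α] [MeasurableSpace β] [StandardBorelSpace β] [Nonempty β]
    {P : Measure Ω} [IsFiniteMeasure P] {W : Ω → α} {Y : Ω → β} (hW : Measurable W)
    (hY : AEMeasurable Y P) {B : Set α} {C : Set β} (hB : MeasurableSet B)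
    (hC : MeasurableSet C) {θ : ℝ≥0∞}
    (hθ : ∀ᵐ ω ∂P, W ω ∈ B → condDistrib Y W P (W ω) C ≤ θ) :
    P (W ⁻¹' B ∩ Y ⁻¹' C) ≤ θ * P (W ⁻¹' B) := by
  rw [← setLIntegral_preimage_condDistrib hW hY hC hB, ← setLIntegral_const]
  exact setLIntegral_mono_ae' (hW hB) hθ

namespace IsRankOptProcess

variable {d : ℕ} {Ω : Type*} [MeasurableSpace Ω] {P : Measure Ω} [IsFiniteMeasure P]
  {Xset : Set (Euc d)} {f : Euc d → ℝ}

lemma measure_history_inter_le {n : ℕ} {X : Fin n → Ω → Euc d}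
    (hproc : IsRankOptProcess P Xset f n X) {t : ℕ} (ht : t + 1 < n)
    {B : Set (Fin (t + 1) → Euc d)} {C : Set (Euc d)} (hB : MeasurableSet B)
    (hC : MeasurableSet C) {θ : ℝ≥0∞}
    (hθ : ∀ v ∈ B, ∀ A : Set (Euc d), {x ∈ Xset | ∀ i, f (v i) ≤ f x} ⊆ A → A ⊆ Xset →
      unifOn A C ≤ θ) :
    P ((fun ω i => X (Fin.castLE ht.le i) ω) ⁻¹' B ∩ X ⟨t + 1, ht⟩ ⁻¹' C)
      ≤ θ * P ((fun ω i => X (Fin.castLE ht.le i) ω) ⁻¹' B) := by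
  obtain ⟨hXm, -, hstep⟩ := hproc
  refine measure_preimage_inter_le_of_condDistrib_le
    (measurable_pi_lambda _ fun i => hXm _) (hXm _).aemeasurable hB hC ?_
  filter_upwards [hstep t ht] with ω hω hB
  obtain ⟨A, -, -, hlevel, hAX, hlaw⟩ := hω
  rw [hlaw]
  exact hθ _ hB A hlevel hAX

lemma ae_mem {n : ℕ} {X : Fin n → Ω → Euc d} (hproc : IsRankOptProcess P Xset f n X)
    (hX : MeasurableSet Xset) (i : Fin n) : ∀ᵐ ω ∂P, X i ω ∈ Xset := by
  have hcompl : ∀ A ⊆ Xset, unifOn A Xsetᶜ = 0 := fun A hAX => by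
    rw [unifOn_eq_cond, cond_apply' hX.compl, (disjoint_compl_right.mono_left hAX).inter_eq,
      measure_empty, mul_zero]
  rw [ae_iff]
  obtain ⟨_ | t, hi⟩ := i
  · change P (X ⟨0, hi⟩ ⁻¹' Xsetᶜ) = 0
    rw [← Measure.map_apply (hproc.1 _) hX.compl, hproc.2.1 hi, hcompl Xset subset_rfl]
  · change P (X ⟨t + 1, hi⟩ ⁻¹' Xsetᶜ) = 0
    have := hproc.measure_history_inter_le hi MeasurableSet.univ hX.compl
      (θ := 0) fun _ _ A _ hAX => (hcompl A hAX).le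
    rwa [preimage_univ, univ_inter, zero_mul, nonpos_iff_eq_zero] at this

lemma measure_forall_mem_le {n : ℕ} {X : Fin (n + 1) → Ω → Euc d}
    (hproc : IsRankOptProcess P Xset f (n + 1) X) {D : Set (Euc d)} (hD : MeasurableSet D)
    {θ : ℝ≥0∞} (hθ : ∀ (t : ℕ) (v : Fin t → Euc d) (A : Set (Euc d)), (∀ i, v i ∈ D) →
      {x ∈ Xset | ∀ i, f (v i) ≤ f x} ⊆ A → A ⊆ Xset → unifOn A D ≤ θ) :
    P {ω | ∀ i, X i ω ∈ D} ≤ θ ^ (n + 1) := by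
  suffices h : ∀ t (ht : t + 1 ≤ n + 1),
      P {ω | ∀ i : Fin (t + 1), X (Fin.castLE ht i) ω ∈ D} ≤ θ ^ (t + 1) by
    simpa using h n le_rfl
  intro t
  induction t with
  | zero =>
    intro ht
    -- the empty history admits only the region `Xset` itself
    have h0 : unifOn Xset D ≤ θ :=
      hθ 0 Fin.elim0 Xset (fun i => i.elim0) (fun x hx => hx.1) subset_rfl
    have hev : {ω | ∀ i : Fin 1, X (Fin.castLE ht i) ω ∈ D} = X ⟨0, n.succ_pos⟩ ⁻¹' D := by
      ext ω; simp [Fin.forall_fin_one]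
    rw [hev, ← Measure.map_apply (hproc.1 _) hD, hproc.2.1 n.succ_pos, pow_one]
    exact h0
  | succ t ih =>
    intro ht
    have hev : {ω | ∀ i : Fin (t + 2), X (Fin.castLE ht i) ω ∈ D}
        = (fun ω i => X (Fin.castLE (Nat.le_of_lt ht) i) ω) ⁻¹' {v | ∀ i, v i ∈ D}
          ∩ X ⟨t + 1, ht⟩ ⁻¹' D := by
      ext ω
      refine ⟨fun h => ⟨fun i => h i.castSucc, h (Fin.last _)⟩, fun ⟨h, hlast⟩ => ?_⟩
      exact Fin.lastCases hlast h
    have hB : MeasurableSet {v : Fin (t + 1) → Euc d | ∀ i, v i ∈ D} := by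
      simp only [ofPred_forall]
      exact MeasurableSet.iInter fun i => measurable_pi_apply i hD
    calc _ = _ := congrArg P hev
      _ ≤ θ * P ((fun ω i => X (Fin.castLE (Nat.le_of_lt ht) i) ω) ⁻¹' {v | ∀ i, v i ∈ D}) :=
        hproc.measure_history_inter_le ht hB hD fun v hv A => hθ _ v A hv
      _ ≤ θ * θ ^ (t + 1) := mul_le_mul_right (ih _) θ
      _ = θ ^ (t + 2) := (pow_succ' θ _).symm

lemma measure_forall_lt_le {n : ℕ} {X : Fin (n + 1) → Ω → Euc d}
    (hproc : IsRankOptProcess P Xset f (n + 1) X) (hX : MeasurableSet Xset)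
    (hXfin : volume Xset ≠ ∞) {c : ℝ} (hS : MeasurableSet {x ∈ Xset | c ≤ f x}) :
    P {ω | ∀ i, f (X i ω) < c}
      ≤ (1 - volume {x ∈ Xset | c ≤ f x} / volume Xset) ^ (n + 1) := by
  set S := {x ∈ Xset | c ≤ f x}
  have hmem : ∀ᵐ ω ∂P, ∀ i, X i ω ∈ Xset := ae_all_iff.2 (hproc.ae_mem hX)
  calc P {ω | ∀ i, f (X i ω) < c} ≤ P {ω | ∀ i, X i ω ∈ Xset \ S} := by
        refine measure_mono_ae ?_
        filter_upwards [hmem] with ω hω hlt i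
        exact ⟨hω i, fun hS => (hlt i).not_ge hS.2⟩
    _ ≤ _ := hproc.measure_forall_mem_le (hX.diff hS) fun t v A hv hlevel hAX => by
        have hlt : ∀ i, f (v i) < c := fun i => not_le.1 fun h => (hv i).2 ⟨(hv i).1, h⟩
        have hSA : S ⊆ A := fun y hy => hlevel ⟨hy.1, fun i => (hlt i).le.trans hy.2⟩
        exact (measure_mono (sdiff_subset_compl _ _)).trans (unifOn_compl_le hS hSA hAX hXfin)

end IsRankOptProcess

theorem rankopt_consistency_general
    {d : ℕ} {Xset : Set (Euc d)} (hXcomp : IsCompact Xset)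
    {f : Euc d → ℝ} (hf : HasContinuousRanking Xset f)
    {xM : Euc d}
    (hident : ∀ ε : ℝ, 0 < ε → 0 < volume {x ∈ Xset | f xM - ε ≤ f x})
    {Ω : ℕ → Type*} [∀ n, MeasurableSpace (Ω n)] {P : ∀ n, Measure (Ω n)}
    [∀ n, IsProbabilityMeasure (P n)]
    {X : ∀ n : ℕ, Fin (n + 1) → Ω n → Euc d}
    (hproc : ∀ n, IsRankOptProcess (P n) Xset f (n + 1) (X n)) :
    ∀ ε : ℝ, 0 < ε →
      Filter.Tendsto (fun n => P n {ω | ∀ i : Fin (n + 1), f (X n i ω) < f xM - ε})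
        Filter.atTop (nhds 0) := by
  intro ε hε
  have hX : MeasurableSet Xset := hXcomp.isClosed.measurableSet
  have hXfin : volume Xset ≠ ∞ := hXcomp.measure_lt_top.ne
  have hθ : 1 - volume {x ∈ Xset | f xM - ε ≤ f x} / volume Xset < 1 :=
    ENNReal.sub_lt_self ENNReal.one_ne_top one_ne_zero
      (ENNReal.div_pos (hident ε hε).ne' hXfin).ne'
  refine tendsto_of_tendsto_of_tendsto_of_le_of_le tendsto_const_nhds
    ((ENNReal.tendsto_pow_atTop_nhds_zero_of_lt_one hθ).comp (Filter.tendsto_add_atTop_nat 1))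
    (fun _ => zero_le) fun n => ?_
  exact (hproc n).measure_forall_lt_le hX hXfin (hf.measurableSet_le hX _)

/-- **Consistency of RankOpt** (Corollary 2 of the paper): under the identifiability condition,
the best observed value of a RankOpt-type process converges in probability to the maximum,
i.e. `P(f(X_în) < max f - ε) → 0` for every `ε > 0`. -/
theorem rankopt_consistency
    {d : ℕ} {Xset : Set (Euc d)} (hXcomp : IsCompact Xset) (hXconv : Convex ℝ Xset)
    (hXint : (interior Xset).Nonempty)
    {f : Euc d → ℝ} (hf : HasContinuousRanking Xset f)
    {xM : Euc d} (hxM : xM ∈ Xset) (hmax : ∀ x ∈ Xset, f x ≤ f xM)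
    (hident : ∀ ε : ℝ, 0 < ε → 0 < volume {x ∈ Xset | f xM - ε ≤ f x})
    {Ω : ℕ → Type*} [∀ n, MeasurableSpace (Ω n)] {P : ∀ n, Measure (Ω n)}
    [∀ n, IsProbabilityMeasure (P n)]
    {X : ∀ n : ℕ, Fin (n + 1) → Ω n → Euc d}
    (hproc : ∀ n, IsRankOptProcess (P n) Xset f (n + 1) (X n)) :
    ∀ ε : ℝ, 0 < ε →
      Filter.Tendsto (fun n => P n {ω | ∀ i : Fin (n + 1), f (X n i ω) < f xM - ε})
        Filter.atTop (nhds 0) :=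
  rankopt_consistency_general hXcomp hf hident hproc
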